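/- arXiv:1511.09301 — 2 statements merged into one kernel-verified Lean document; each statement's English description precedes it below -/
import Mathlib

section
/- Let A be a set, S and T subsets of A, and s', t' non-negative integers. Then there exist subsets S' and T' of A with |S'| = s', |T'| = t', S ∩ S' = ∅, T ∩ T' = ∅, and S' ∩ T' = ∅ if and only if (i) |S ∩ T| + s' + t' ≤ |A|, (ii) |S| + s' ≤ |A|, and (iii) |T| + t' ≤ |A|. -/
/-!
Necessity: `S ∩ T, S', T'` are pairwise disjoint in `A`, as are `S, S'` and `T, T'`.
Sufficiency: take `T' ⊆ A \ T` overlapping `S` as much as possible, i.e. `T'` either contains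
all of `S \ T` or lies inside `S`. Then `|S ∪ T'|` is `|S ∩ T| + t'` or `|S|`, so by (i) and (ii)
there is still room for `S'` of size `s'` in `A \ (S ∪ T')`.
-/

open Finset

namespace Finset

variable {α : Type*} [DecidableEq α]

theorem card_add_card_le_of_disjoint {A X Y : Finset α} (hX : X ⊆ A) (hY : Y ⊆ A)
    (h : Disjoint X Y) : #X + #Y ≤ #A := by
  rw [← card_union_of_disjoint h]
  exact card_le_card (union_subset hX hY)

theorem exists_subset_card_eq_and_inter_subset_or_subset {B : Finset α} {n : ℕ} (C : Finset α)
    (hn : n ≤ #B) : ∃ X ⊆ B, #X = n ∧ (B ∩ C ⊆ X ∨ X ⊆ C) := by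
  rcases le_total n #(B ∩ C) with h | h
  · obtain ⟨X, hX, rfl⟩ := exists_subset_card_eq h
    exact ⟨X, hX.trans inter_subset_left, rfl, .inr (hX.trans inter_subset_right)⟩
  · obtain ⟨X, hCX, hXB, rfl⟩ := exists_subsuperset_card_eq inter_subset_left h hn
    exact ⟨X, hXB, rfl, .inl hCX⟩

theorem exists_subset_sdiff_card_eq_card_union_le {A S T : Finset α} {t : ℕ} (hS : S ⊆ A)
    (ht : t ≤ #(A \ T)) : ∃ X ⊆ A \ T, #X = t ∧ #(S ∪ X) ≤ max (#(S ∩ T) + t) #S := by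
  obtain ⟨X, hX, rfl, hSX | hXS⟩ := exists_subset_card_eq_and_inter_subset_or_subset S ht
  · have : S ∪ X ⊆ S ∩ T ∪ X := by
      intro x hx
      rcases mem_union.1 hx with hxS | hxX
      · by_cases hxT : x ∈ T
        · exact mem_union_left _ (mem_inter.2 ⟨hxS, hxT⟩)
        · exact mem_union_right _ (hSX (mem_inter.2 ⟨mem_sdiff.2 ⟨hS hxS, hxT⟩, hxS⟩))
      · exact mem_union_right _ hxX
    exact ⟨X, hX, rfl, le_max_of_le_left ((card_le_card this).trans (card_union_le _ _))⟩
  · exact ⟨X, hX, rfl, by rw [union_eq_left.2 hXS]; exact le_max_right _ _⟩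

end Finset

/-- Horsley's set-relabeling theorem: existence of disjoint subsets `S'`, `T'` of `A`
of prescribed sizes avoiding `S` and `T` respectively, iff three counting conditions hold. -/
theorem setsAndRelabeling {α : Type*} [DecidableEq α] (A S T : Finset α)
    (hS : S ⊆ A) (hT : T ⊆ A) (s' t' : ℕ) :
    (∃ S' T' : Finset α, S' ⊆ A ∧ T' ⊆ A ∧ S'.card = s' ∧ T'.card = t' ∧
        S ∩ S' = ∅ ∧ T ∩ T' = ∅ ∧ S' ∩ T' = ∅) ↔
      ((S ∩ T).card + s' + t' ≤ A.card ∧ S.card + s' ≤ A.card ∧ T.card + t' ≤ A.card) := by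
  simp only [← disjoint_iff_inter_eq_empty]
  constructor
  · rintro ⟨S', T', hS'A, hT'A, rfl, rfl, hSS', hTT', hS'T'⟩
    refine ⟨?_, card_add_card_le_of_disjoint hS hS'A hSS', card_add_card_le_of_disjoint hT hT'A hTT'⟩
    rw [← card_union_of_disjoint (hSS'.mono_left inter_subset_left)]
    exact card_add_card_le_of_disjoint (union_subset (inter_subset_left.trans hS) hS'A) hT'A
      (disjoint_union_left.2 ⟨hTT'.mono_left inter_subset_right, hS'T'⟩)
  · rintro ⟨hi, hs, ht⟩
    obtain ⟨T', hT', rfl, hST'⟩ :=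
      exists_subset_sdiff_card_eq_card_union_le hS (t := t') (by rw [card_sdiff_of_subset hT]; omega)
    have hST'A : S ∪ T' ⊆ A := union_subset hS (hT'.trans sdiff_subset)
    obtain ⟨S', hS', rfl⟩ := exists_subset_card_eq (s := A \ (S ∪ T')) (n := s') <| by
      rw [card_sdiff_of_subset hST'A]
      omega
    rw [subset_sdiff, disjoint_union_right] at hS'
    rw [subset_sdiff] at hT'
    exact ⟨S', T', hS'.1, hT'.1, rfl, rfl, hS'.2.1.symm, hT'.2.symm, hS'.2.2⟩
end

section
/- Suppose u < m and there exists an m-cycle decomposition of (λ+μ)K_{v+u} − λK_v. Then ⌊((λ+μ)·C(u,2))/(u−1)⌋·(m−u+1) + ε·(m−(u−1)/2) ≤ μ·C(v,2) + vu(λ+μ), where ε = 0 if u(λ+μ) is even and ε = 1 if u(λ+μ) is odd. -/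
open Finset

/-- Multiset of edges of the closed walk (cycle) given by `c : Fin n → V`. -/
def cycleEdges {V : Type*} {n : ℕ} (c : Fin n → V) : Multiset (Sym2 V) :=
  Finset.univ.val.map fun i : Fin n => s(c i, c (finRotate n i))

/-- `D` is a decomposition of the multigraph with edge-multiplicity function `G`
into cycles of length `m`. -/
def IsCycleDecomp {V : Type*} [DecidableEq V] (m : ℕ) (G : Sym2 V → ℕ)
    (D : Multiset (Fin m → V)) : Prop :=
  (∀ c ∈ D, Function.Injective c) ∧
    ∀ e : Sym2 V, ((D.map cycleEdges).sum).count e = G e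

/-- The multigraph `(λ+μ)K_{v+u} − λK_v`: multiplicity `μ` between two vertices of the
distinguished `v`-set (the first `v` vertices of `Fin (v+u)`), and `λ+μ` otherwise. -/
def mixedComplete (lam mu v u : ℕ) : Sym2 (Fin (v + u)) → ℕ :=
  Sym2.lift ⟨fun x y => if x = y then 0 else if (x : ℕ) < v ∧ (y : ℕ) < v then mu else lam + mu,
    fun x y => if_congr eq_comm rfl (if_congr and_comm rfl rfl)⟩

/-!
Count the edges of the decomposition with both ends in `U`: there are `(λ+μ)·C(u,2)` of them.
A cycle meets `U` in at most `u < m` vertices, so it cannot close up inside `U` and contains at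
most `u - 1` such edges. Hence the number `t` of cycles satisfies `(λ+μ)·C(u,2) ≤ t·(u-1)`, and
`t` exceeds the quotient `q = ⌊(λ+μ)·C(u,2)/(u-1)⌋` when the division leaves a remainder `ρ`,
which happens exactly when `u(λ+μ)` is odd (then `ρ = (u-1)/2`). The remaining
`μ·C(v,2) + vu(λ+μ) = t·m - (λ+μ)·C(u,2)` edges are therefore at least `q·(m-u+1)`, plus
`m - ρ` when `ρ ≠ 0`.
-/

lemma Nat.choose_two_add (a b : ℕ) :
    (a + b).choose 2 = a.choose 2 + b.choose 2 + a * b := by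
  induction b with
  | zero => simp
  | succ b ih =>
    rw [← add_assoc, Nat.choose_succ_succ, ih, Nat.choose_one_right, Nat.choose_succ_succ,
      Nat.choose_one_right]
    ring

lemma Nat.mul_choose_two_mod_sub_one (c u : ℕ) :
    c * u.choose 2 % (u - 1) = if u * c % 2 = 0 then 0 else (u - 1) / 2 := by
  obtain ⟨k, rfl | rfl⟩ := Nat.even_or_odd' u
  · have hk : (2 * k).choose 2 = k * (2 * k - 1) := by
      rw [Nat.choose_two_right, mul_assoc, Nat.mul_div_cancel_left _ two_pos]
    rw [hk, ← mul_assoc, Nat.mul_mod_left, mul_assoc, Nat.mul_mod_right, if_pos rfl]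
  · have hk : (2 * k + 1).choose 2 = (2 * k + 1) * k := by
      rw [Nat.choose_two_right, Nat.add_sub_cancel, mul_left_comm, Nat.mul_div_cancel_left _ two_pos]
    rw [hk, Nat.add_sub_cancel, Nat.mul_div_cancel_left k two_pos, ← mul_assoc, mul_comm c,
      Nat.mul_mod_mul_right]
    rcases Nat.mod_two_eq_zero_or_one ((2 * k + 1) * c) with h | h <;> simp [h]

lemma Nat.div_mul_sub_add_le_sub {A t k m : ℕ} (hkm : k ≤ m) (hA : A ≤ t * k) :
    A / k * (m - k) + (if A % k = 0 then 0 else m - A % k) ≤ t * m - A := by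
  rcases Nat.eq_zero_or_pos k with rfl | hk
  · simp_all
  obtain ⟨d, rfl⟩ := Nat.exists_eq_add_of_le hkm
  have hdiv := Nat.div_add_mod' A k
  have hmod := Nat.mod_lt A hk
  set q := A / k
  set ρ := A % k
  apply Nat.le_sub_of_add_le
  split_ifs with hρ
  · have hqt : q ≤ t := Nat.le_of_mul_le_mul_right (by omega) hk
    have := Nat.mul_le_mul_right (k + d) hqt
    rw [Nat.add_sub_cancel_left]
    nlinarith
  · have hqt : q + 1 ≤ t := by
      by_contra h
      have := Nat.mul_le_mul_right k (show t ≤ q by omega)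
      omega
    have := Nat.mul_le_mul_right (k + d) hqt
    rw [Nat.add_sub_cancel_left]
    have : k + d - ρ + ρ = k + d := by omega
    nlinarith

open Fin.NatCast in
lemma Finset.eq_univ_of_forall_finRotate_mem {n : ℕ} {B : Finset (Fin n)} (hB : B.Nonempty)
    (h : ∀ i ∈ B, finRotate n i ∈ B) : B = univ := by
  obtain ⟨i₀, hi₀⟩ := hB
  obtain ⟨k, rfl⟩ : ∃ k, n = k + 1 := Nat.exists_eq_add_one_of_ne_zero (Fin.pos i₀).ne'
  have hiter : ∀ j : ℕ, i₀ + (j : Fin (k + 1)) ∈ B := by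
    intro j
    induction j with
    | zero => simpa using hi₀
    | succ j ih => simpa [finRotate_apply, add_assoc] using h _ ih
  refine eq_univ_of_forall fun i => ?_
  simpa [Fin.cast_val_eq_self] using hiter (i - i₀ : Fin (k + 1))

lemma card_filter_cycleEdges_mem_sym2_le {V : Type*} [DecidableEq V] {m : ℕ} {c : Fin m → V}
    (hc : Function.Injective c) {U : Finset V} (hUm : #U < m) :
    Multiset.card ((cycleEdges c).filter (· ∈ U.sym2)) ≤ #U - 1 := by
  set B : Finset (Fin m) := {i | c i ∈ U}
  have hB : #B ≤ #U := card_le_card_of_injOn c (by simp [B, Set.MapsTo]) hc.injOn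
  have hcard : Multiset.card ((cycleEdges c).filter (· ∈ U.sym2))
      = #{i | c i ∈ U ∧ c (finRotate m i) ∈ U} := by
    rw [cycleEdges, Multiset.filter_map, Multiset.card_map, card_def, filter_val]
    simp only [Function.comp_apply, Finset.mk_mem_sym2_iff]
  rw [hcard]
  obtain hBe | ⟨i, hiB, hiN⟩ : B = ∅ ∨ ∃ i ∈ B, finRotate m i ∉ B := by
    by_contra! hcon
    have := eq_univ_of_forall_finRotate_mem hcon.1 hcon.2
    simp [this] at hB
    omega
  · simp_all [B]
  · calc #{i | c i ∈ U ∧ c (finRotate m i) ∈ U} ≤ #(B.erase i) := card_le_card fun j hj => by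
          simp only [mem_filter, mem_univ, true_and] at hj
          simp only [mem_erase, B, mem_filter, mem_univ, true_and]
          exact ⟨by rintro rfl; exact hiN (by simpa [B] using hj.2), hj.1⟩
      _ ≤ #U - 1 := by rw [card_erase_of_mem hiB]; omega

lemma Multiset.card_filter_mem_eq_sum_count {α : Type*} [DecidableEq α] (M : Multiset α)
    (S : Finset α) : card (M.filter (· ∈ S)) = ∑ a ∈ S, M.count a := by
  rw [← sum_count_eq_card (s := S) (by simp)]
  exact sum_congr rfl fun a ha => count_filter_of_pos ha

lemma Finset.card_filter_sym2_not_isDiag {α : Type*} [DecidableEq α] (s : Finset α) :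
    #{e ∈ s.sym2 | ¬e.IsDiag} = (#s).choose 2 := by
  rw [sym2_eq_image, Sym2.filter_image_mk_not_isDiag, Sym2.card_image_offDiag]

lemma Finset.sum_sym2_ite_isDiag {α : Type*} [DecidableEq α] (s : Finset α) (a : ℕ) :
    ∑ e ∈ s.sym2, (if e.IsDiag then 0 else a) = a * (#s).choose 2 := by
  rw [sum_ite, sum_const_zero, zero_add, sum_const, card_filter_sym2_not_isDiag, smul_eq_mul,
    mul_comm]

section IsCycleDecomp

variable {V : Type*} {m : ℕ} {D : Multiset (Fin m → V)}

lemma card_sum_map_cycleEdges : Multiset.card (D.map cycleEdges).sum = Multiset.card D * m := by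
  change Multiset.card (D.bind cycleEdges) = _
  simp [Multiset.card_bind, cycleEdges]

variable [DecidableEq V] {G : Sym2 V → ℕ}

lemma IsCycleDecomp.sum_eq_card_filter (hD : IsCycleDecomp m G D) (S : Finset (Sym2 V)) :
    ∑ e ∈ S, G e = Multiset.card ((D.map cycleEdges).sum.filter (· ∈ S)) := by
  simp_rw [Multiset.card_filter_mem_eq_sum_count, hD.2]

lemma IsCycleDecomp.card_filter_mem_sym2_le (hD : IsCycleDecomp m G D) {U : Finset V}
    (hUm : #U < m) :
    Multiset.card ((D.map cycleEdges).sum.filter (· ∈ U.sym2)) ≤ Multiset.card D * (#U - 1) := by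
  change Multiset.card ((D.bind cycleEdges).filter _) ≤ _
  rw [Multiset.filter_bind, Multiset.card_bind, ← smul_eq_mul, ← Multiset.card_map]
  exact Multiset.sum_le_card_nsmul _ _ <| by
    simpa using fun c hc => card_filter_cycleEdges_mem_sym2_le (hD.1 c hc) hUm

end IsCycleDecomp

section mixedComplete

variable (lam mu v u : ℕ)

def lowVertices : Finset (Fin (v + u)) := {x | (x : ℕ) < v}

lemma card_lowVertices : #(lowVertices v u) = v := by
  rw [lowVertices, Fin.card_filter_val_lt, min_eq_right (Nat.le_add_right v u)]

lemma card_compl_lowVertices : #(lowVertices v u)ᶜ = u := by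
  simp [card_compl, card_lowVertices]

lemma sum_sym2_compl_lowVertices_mixedComplete :
    ∑ e ∈ (lowVertices v u)ᶜ.sym2, mixedComplete lam mu v u e = (lam + mu) * u.choose 2 := by
  calc ∑ e ∈ (lowVertices v u)ᶜ.sym2, mixedComplete lam mu v u e
      = ∑ e ∈ (lowVertices v u)ᶜ.sym2, if e.IsDiag then 0 else lam + mu := by
        refine sum_congr rfl fun e he => ?_
        induction e using Sym2.ind with
        | _ x y =>
          simp only [mk_mem_sym2_iff, mem_compl, lowVertices, mem_filter, mem_univ, true_and] at he
          simp [mixedComplete, he]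
    _ = (lam + mu) * u.choose 2 := by rw [sum_sym2_ite_isDiag, card_compl_lowVertices]

lemma sum_mixedComplete_add :
    ∑ e, mixedComplete lam mu v u e + lam * v.choose 2 = (lam + mu) * (v + u).choose 2 := by
  have hsplit : ∀ e : Sym2 (Fin (v + u)), mixedComplete lam mu v u e +
      (if e ∈ (lowVertices v u).sym2 then (if e.IsDiag then 0 else lam) else 0) =
      if e.IsDiag then 0 else lam + mu := by
    intro e
    induction e using Sym2.ind with
    | _ x y =>
      simp only [mixedComplete, Sym2.lift_mk, mk_mem_sym2_iff, lowVertices, mem_filter, mem_univ,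
        true_and, Sym2.mk_isDiag_iff]
      split_ifs <;> omega
  have hlow := sum_sym2_ite_isDiag (lowVertices v u) lam
  rw [card_lowVertices, ← univ_inter (lowVertices v u).sym2, ← sum_ite_mem] at hlow
  rw [← hlow, ← sum_add_distrib, sum_congr rfl fun e _ => hsplit e, ← sym2_univ, sum_sym2_ite_isDiag,
    card_univ, Fintype.card_fin]

end mixedComplete

theorem necessary_d_general (lam mu v u m : ℕ) (hu : 2 ≤ u) (hum : u < m)
    (D : Multiset (Fin m → Fin (v + u)))
    (hD : IsCycleDecomp m (mixedComplete lam mu v u) D)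
    (eps : ℕ) (heps : eps = if u * (lam + mu) % 2 = 0 then 0 else 1) :
    ((lam + mu) * Nat.choose u 2) / (u - 1) * (m - u + 1) + eps * (m - (u - 1) / 2) ≤
      mu * Nat.choose v 2 + v * u * (lam + mu) := by
  set A := (lam + mu) * u.choose 2
  set t := Multiset.card D
  have hA : A ≤ t * (u - 1) := by
    have := hD.card_filter_mem_sym2_le (U := (lowVertices v u)ᶜ)
      (by rw [card_compl_lowVertices]; exact hum)
    rwa [← hD.sum_eq_card_filter, sum_sym2_compl_lowVertices_mixedComplete,
      card_compl_lowVertices] at this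
  have hedges : t * m - A = mu * v.choose 2 + v * u * (lam + mu) := by
    have htotal := sum_mixedComplete_add lam mu v u
    rw [hD.sum_eq_card_filter, Multiset.filter_eq_self.2 fun _ _ => mem_univ _,
      card_sum_map_cycleEdges, Nat.choose_two_add] at htotal
    apply Nat.sub_eq_of_eq_add
    simp only [A, t]
    linarith
  have hrem : eps * (m - (u - 1) / 2) ≤ if A % (u - 1) = 0 then 0 else m - A % (u - 1) := by
    rw [Nat.mul_choose_two_mod_sub_one, heps]
    split_ifs with hodd hrem_zero <;> try simp
    -- `(u - 1) / 2 = 0` forces `u = 2`, against the oddness of `u * (lam + mu)`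
    obtain rfl : u = 2 := by omega
    omega
  calc A / (u - 1) * (m - u + 1) + eps * (m - (u - 1) / 2)
      ≤ A / (u - 1) * (m - (u - 1)) + (if A % (u - 1) = 0 then 0 else m - A % (u - 1)) := by
        rw [show m - u + 1 = m - (u - 1) by omega]
        gcongr
    _ ≤ t * m - A := Nat.div_mul_sub_add_le_sub (by omega) hA
    _ = mu * v.choose 2 + v * u * (lam + mu) := hedges

/-- Necessary condition (d): the counting bound when `u < m`. -/
theorem necessary_d (lam mu v u m : ℕ) (hlam : 0 < lam) (hmu : 0 < mu)
    (hv : 0 < v) (hu : 2 ≤ u) (hm : 2 < m) (hum : u < m)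
    (D : Multiset (Fin m → Fin (v + u)))
    (hD : IsCycleDecomp m (mixedComplete lam mu v u) D)
    (eps : ℕ) (heps : eps = if u * (lam + mu) % 2 = 0 then 0 else 1) :
    ((lam + mu) * Nat.choose u 2) / (u - 1) * (m - u + 1) + eps * (m - (u - 1) / 2) ≤
      mu * Nat.choose v 2 + v * u * (lam + mu) :=
  necessary_d_general lam mu v u m hu hum D hD eps heps
end
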